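/- arXiv:1806.10790 — 2 statements merged into one kernel-verified Lean document; each statement's English description precedes it below -/
import Mathlib

section
/- Let A be an m×n real matrix (n ≥ 2) whose columns have ℓ2-norm 1, let s ∈ {1,…,n} with 2s−1 ≤ n−1 satisfy μ₁(A, s−1) + μ₁(A, 2s−1) < 1, let σ > 0, and set λ = σ√(2 log n) and η* = (3/2)σ√(2 log n). Let x ∈ ℝ^n be s-sparse and b = Ax + z with ‖Aᵀz‖_∞ ≤ λ. Let x̂ be a minimizer of ‖y‖₁ over all y ∈ ℝ^n with ‖Aᵀ(b − Ay)‖_∞ ≤ η*. Then ‖x̂ − x‖₂² ≤ [72(5 + log n) / (1 − μ₁(A,s−1) − μ₁(A,2s−1))²]·Σ_{j=1}^n max{σ², x(j)²}. -/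
/-!
Write `v = x̂ - x`, `G = AᵀA` and `ε = λ + η* = (5/2) λ`. Since `x` is feasible too, `‖G v‖_∞ ≤ ε`,
and `ℓ₁`-minimality of `x̂` puts `v` in the cone `‖v_{Sᶜ}‖₁ ≤ ‖v_S‖₁` over the support `S` of `x`.
Summing `v_i = (G v)_i - ∑_{j ≠ i} G_ij v_j` over `S` gives
`(1 - μ₁(s-1) - μ₁(s)) ‖v_S‖₁ ≤ s ε`; for `s = 1` this already bounds `‖v‖₂ ≤ ‖v‖₁ ≤ 2 ‖v_S‖₁`.
For `s ≥ 2` let `B` hold the `2s` largest entries of `|v|`. On `B` the quadratic form of `G` is at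
least `1 - μ₁(2s-1)` (Gershgorin); the coupling of `B` with the tail is controlled by shelling the
tail into blocks of `2s - 1` entries; the tail is small in `ℓ₂` because each of its entries is at
most the mean of `|v|` over `B`. Subadditivity gives `μ₁(2s-1) ≤ 3 μ₁(s-1)`, and the estimates
combine to `‖v‖₂² (1 - μ₁(s-1) - μ₁(2s-1))² ≤ 7 s ε² ≤ 72 (5 + log n) · 2 s σ²`.
-/

open scoped Classical

/-- Cumulative coherence function μ₁(A, s). -/
noncomputable def mu1 {m n : ℕ} (A : Matrix (Fin m) (Fin n) ℝ) (s : ℕ) : ℝ :=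
  sSup {t : ℝ | ∃ S : Finset (Fin n), S.card ≤ s ∧ ∃ i : Fin n, i ∉ S ∧
    t = ∑ j ∈ S, |∑ k : Fin m, A k i * A k j|}

open Finset
open scoped Matrix

section Combinatorics

variable {ι : Type*} [DecidableEq ι]

theorem exists_top_subset_card_eq (w : ι → ℝ) {C : Finset ι} {k : ℕ} (hk : k ≤ #C) :
    ∃ U ⊆ C, #U = k ∧ (∀ i ∈ U, ∀ j ∈ C \ U, w j ≤ w i) ∧
      ∀ V ⊆ C, #V = k → ∑ j ∈ V, w j ≤ ∑ j ∈ U, w j := by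
  obtain ⟨U, hU, hmax⟩ :=
    (C.powersetCard k).exists_max_image (fun V => ∑ j ∈ V, w j) (powersetCard_nonempty.2 hk)
  rw [mem_powersetCard] at hU
  refine ⟨U, hU.1, hU.2, fun i hi j hj => ?_,
    fun V hV hVk => hmax V (mem_powersetCard.2 ⟨hV, hVk⟩)⟩
  rw [mem_sdiff] at hj
  have hjU : j ∉ U.erase i := fun h => hj.2 (mem_of_mem_erase h)
  have hswap : insert j (U.erase i) ∈ C.powersetCard k := by
    refine mem_powersetCard.2 ⟨insert_subset hj.1 ((erase_subset i U).trans hU.1), ?_⟩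
    rw [card_insert_of_notMem hjU, card_erase_of_mem hi, hU.2]
    have := card_pos.2 ⟨i, hi⟩
    omega
  have := hmax _ hswap
  rw [sum_insert hjU, ← add_sum_erase U w hi] at this
  linarith

/-- Shelling: cut `C` into consecutive blocks of the `r` largest remaining weights; the weights of
each block after the first are bounded by the mean of the previous block. -/
theorem sum_mul_le_of_forall_card_le {g w : ι → ℝ} (hg : ∀ j, 0 ≤ g j) (hw : ∀ j, 0 ≤ w j)
    {r : ℕ} (hr : 0 < r) {μ : ℝ} (C : Finset ι)
    (hcoh : ∀ U ⊆ C, #U ≤ r → ∑ j ∈ U, g j ≤ μ) {β : ℝ} (hβ0 : 0 ≤ β)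
    (hβ : ∀ j ∈ C, w j ≤ β) :
    ∑ j ∈ C, g j * w j ≤ μ * β + μ * (∑ j ∈ C, w j) / r := by
  induction C using Finset.strongInduction generalizing β with
  | H C ih =>
    have hμ : 0 ≤ μ := by simpa using hcoh ∅ (empty_subset C) (Nat.zero_le r)
    have hblock : ∀ U ⊆ C, #U ≤ r → ∑ j ∈ U, g j * w j ≤ μ * β := fun U hUC hU =>
      calc ∑ j ∈ U, g j * w j ≤ ∑ j ∈ U, g j * β :=
            sum_le_sum fun j hj => mul_le_mul_of_nonneg_left (hβ j (hUC hj)) (hg j)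
        _ = (∑ j ∈ U, g j) * β := (sum_mul U g β).symm
        _ ≤ μ * β := mul_le_mul_of_nonneg_right (hcoh U hUC hU) hβ0
    by_cases hC : #C ≤ r
    · have : 0 ≤ μ * (∑ j ∈ C, w j) / r := by
        have := sum_nonneg fun j (_ : j ∈ C) => hw j
        positivity
      linarith [hblock C subset_rfl hC]
    obtain ⟨U, hUC, hU, htop, -⟩ := exists_top_subset_card_eq w (not_le.1 hC).le
    have hrR : (0 : ℝ) < r := Nat.cast_pos.2 hr
    have hrest : ∀ j ∈ C \ U, w j ≤ (∑ i ∈ U, w i) / r := fun j hj => by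
      rw [le_div_iff₀ hrR, mul_comm, ← nsmul_eq_mul, ← hU]
      exact card_nsmul_le_sum U w (w j) fun i hi => htop i hi j hj
    have hrest0 : 0 ≤ (∑ i ∈ U, w i) / r := by
      have := sum_nonneg fun j (_ : j ∈ U) => hw j
      positivity
    have hUne : U.Nonempty := card_pos.1 (hU ▸ hr)
    have ih' := ih (C \ U) (sdiff_ssubset hUC hUne)
      (fun V hV => hcoh V (hV.trans sdiff_subset)) hrest0 hrest
    rw [← sum_sdiff hUC, ← sum_sdiff hUC (f := w)]
    calc ∑ j ∈ C \ U, g j * w j + ∑ j ∈ U, g j * w j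
        ≤ μ * ((∑ i ∈ U, w i) / r) + μ * (∑ j ∈ C \ U, w j) / r + μ * β :=
          add_le_add ih' (hblock U hUC hU.le)
      _ = μ * β + μ * (∑ j ∈ C \ U, w j + ∑ j ∈ U, w j) / r := by ring

theorem sum_sum_erase_comm {β : Type*} [AddCommMonoid β] (S T : Finset ι) (F : ι → ι → β) :
    ∑ i ∈ S, ∑ j ∈ T.erase i, F i j = ∑ j ∈ T, ∑ i ∈ S.erase j, F i j :=
  sum_comm' fun i j => by simp only [mem_erase]; tauto

-- Schur test, via `|u v| ≤ (u² + v²) / 2`.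
theorem sum_sum_erase_abs_mul_le {M : ι → ι → ℝ} {B : Finset ι} {μ : ℝ} (v : ι → ℝ)
    (hrow : ∀ i ∈ B, ∑ j ∈ B.erase i, |M i j| ≤ μ)
    (hcol : ∀ j ∈ B, ∑ i ∈ B.erase j, |M i j| ≤ μ) :
    ∑ i ∈ B, ∑ j ∈ B.erase i, |M i j| * (|v i| * |v j|) ≤ μ * ∑ i ∈ B, v i ^ 2 := by
  calc ∑ i ∈ B, ∑ j ∈ B.erase i, |M i j| * (|v i| * |v j|)
      ≤ ∑ i ∈ B, ∑ j ∈ B.erase i, (|M i j| * v i ^ 2 / 2 + |M i j| * v j ^ 2 / 2) := by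
        gcongr with i _ j _
        nlinarith [abs_nonneg (M i j), two_mul_le_add_sq |v i| |v j|, sq_abs (v i), sq_abs (v j)]
    _ = ∑ i ∈ B, (∑ j ∈ B.erase i, |M i j|) * v i ^ 2 / 2
          + ∑ j ∈ B, (∑ i ∈ B.erase j, |M i j|) * v j ^ 2 / 2 := by
        simp only [sum_add_distrib, sum_div, sum_mul]
        rw [sum_sum_erase_comm B B fun i j => |M i j| * v j ^ 2 / 2]
    _ ≤ ∑ i ∈ B, μ * v i ^ 2 / 2 + ∑ j ∈ B, μ * v j ^ 2 / 2 := by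
        gcongr with i hi j hj
        exacts [hrow i hi, hcol j hj]
    _ = μ * ∑ i ∈ B, v i ^ 2 := by rw [← sum_add_distrib, mul_sum]; congr 1; ext; ring

end Combinatorics

section Coherence

variable {m n : ℕ} (A : Matrix (Fin m) (Fin n) ℝ)

theorem sum_abs_gram_le_mu1 {k : ℕ} {U : Finset (Fin n)} {i : Fin n} (hi : i ∉ U)
    (hU : #U ≤ k) : ∑ j ∈ U, |(Aᵀ * A) i j| ≤ mu1 A k := by
  refine le_csSup (Set.Finite.bddAbove ?_) ⟨U, hU, i, hi, rfl⟩
  refine (Set.finite_range fun p : Finset (Fin n) × Fin n =>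
    ∑ j ∈ p.1, |∑ l, A l p.2 * A l j|).subset ?_
  rintro t ⟨S, -, i, -, rfl⟩
  exact ⟨(S, i), rfl⟩

theorem gram_comm (i j : Fin n) : (Aᵀ * A) i j = (Aᵀ * A) j i := by
  simp only [Matrix.mul_apply, Matrix.transpose_apply, mul_comm]

theorem sum_abs_gram_le_mu1' {k : ℕ} {U : Finset (Fin n)} {j : Fin n} (hj : j ∉ U)
    (hU : #U ≤ k) : ∑ i ∈ U, |(Aᵀ * A) i j| ≤ mu1 A k := by
  simpa only [gram_comm A _ j] using sum_abs_gram_le_mu1 A hj hU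

theorem mu1_nonneg (hn : 0 < n) (k : ℕ) : 0 ≤ mu1 A k := by
  simpa using sum_abs_gram_le_mu1 A (notMem_empty (⟨0, hn⟩ : Fin n)) (Nat.zero_le k)

theorem mu1_le_of_forall (hn : 0 < n) {k : ℕ} {c : ℝ}
    (h : ∀ (U : Finset (Fin n)) (i : Fin n), i ∉ U → #U ≤ k → ∑ j ∈ U, |(Aᵀ * A) i j| ≤ c) :
    mu1 A k ≤ c := by
  refine csSup_le ⟨_, ∅, Nat.zero_le k, ⟨0, hn⟩, notMem_empty _, rfl⟩ ?_
  rintro t ⟨U, hU, i, hi, rfl⟩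
  exact h U i hi hU

theorem mu1_mono (hn : 0 < n) {k l : ℕ} (hkl : k ≤ l) : mu1 A k ≤ mu1 A l :=
  mu1_le_of_forall A hn fun _ _ hi hU => sum_abs_gram_le_mu1 A hi (hU.trans hkl)

theorem mu1_add_le (hn : 0 < n) (p q : ℕ) : mu1 A (p + q) ≤ mu1 A p + mu1 A q := by
  refine mu1_le_of_forall A hn fun U i hi hU => ?_
  obtain ⟨U₁, hU₁, hcard⟩ := exists_subset_card_eq (min_le_right p #U)
  have hrest : #(U \ U₁) ≤ q := by rw [card_sdiff_of_subset hU₁]; omega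
  rw [← sum_sdiff hU₁, add_comm (mu1 A p)]
  exact add_le_add (sum_abs_gram_le_mu1 A (fun h => hi (mem_sdiff.1 h).1) hrest)
    (sum_abs_gram_le_mu1 A (fun h => hi (hU₁ h)) (hcard.trans_le (min_le_left p _)))

theorem mu1_two_mul_sub_one_le (hn : 0 < n) {s : ℕ} (hs : 2 ≤ s) :
    mu1 A (2 * s - 1) ≤ 3 * mu1 A (s - 1) :=
  calc mu1 A (2 * s - 1) ≤ mu1 A (s - 1 + (s - 1) + (s - 1)) := mu1_mono A hn (by omega)
    _ ≤ 3 * mu1 A (s - 1) := by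
        linarith [mu1_add_le A hn (s - 1 + (s - 1)) (s - 1), mu1_add_le A hn (s - 1) (s - 1)]

end Coherence

theorem sum_compl_abs_sub_le {ι : Type*} [Fintype ι] [DecidableEq ι] {S : Finset ι}
    {x y : ι → ℝ} (hx : ∀ j ∉ S, x j = 0) (hy : ∑ j, |y j| ≤ ∑ j, |x j|) :
    ∑ j ∈ Sᶜ, |y j - x j| ≤ ∑ j ∈ S, |y j - x j| := by
  have hxS : ∑ j ∈ Sᶜ, |x j| = 0 :=
    sum_eq_zero fun j hj => by rw [hx j (mem_compl.1 hj), abs_zero]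
  have hyS : ∑ j ∈ Sᶜ, |y j - x j| = ∑ j ∈ Sᶜ, |y j| :=
    sum_congr rfl fun j hj => by rw [hx j (mem_compl.1 hj), sub_zero]
  have htri : ∑ j ∈ S, (|x j| - |y j|) ≤ ∑ j ∈ S, |y j - x j| :=
    sum_le_sum fun j _ => abs_sub_comm (x j) (y j) ▸ abs_sub_abs_le_abs_sub _ _
  rw [← sum_add_sum_compl S fun j => |y j|, ← sum_add_sum_compl S fun j => |x j|] at hy
  rw [sum_sub_distrib] at htri
  linarith

section Gram

variable {m n : ℕ} {A : Matrix (Fin m) (Fin n) ℝ}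

theorem gram_apply_self (hA : ∀ j, ∑ k, A k j ^ 2 = 1) (i : Fin n) : (Aᵀ * A) i i = 1 := by
  simp [Matrix.mul_apply, ← sq, hA i]

theorem sum_gram_mul_eq_add (hA : ∀ j, ∑ k, A k j ^ 2 = 1) (v : Fin n → ℝ)
    {B : Finset (Fin n)} {i : Fin n} (hi : i ∈ B) :
    ∑ j ∈ B, (Aᵀ * A) i j * v j = v i + ∑ j ∈ B.erase i, (Aᵀ * A) i j * v j := by
  rw [← add_sum_erase B _ hi, gram_apply_self hA, one_mul]

theorem gram_mulVec_sub_eq {x y : Fin n → ℝ} {z b : Fin m → ℝ} (hb : b = A *ᵥ x + z) :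
    (Aᵀ * A) *ᵥ (y - x) = Aᵀ *ᵥ z - Aᵀ *ᵥ (b - A *ᵥ y) := by
  subst hb
  rw [← Matrix.mulVec_mulVec]
  simp only [Matrix.mulVec_sub, Matrix.mulVec_add]
  abel

theorem abs_le_abs_gram_mulVec_add (hA : ∀ j, ∑ k, A k j ^ 2 = 1) (v : Fin n → ℝ)
    (i : Fin n) :
    |v i| ≤ |((Aᵀ * A) *ᵥ v) i| + ∑ j ∈ univ.erase i, |(Aᵀ * A) i j| * |v j| := by
  have h : ((Aᵀ * A) *ᵥ v) i = v i + ∑ j ∈ univ.erase i, (Aᵀ * A) i j * v j :=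
    sum_gram_mul_eq_add hA v (mem_univ i)
  calc |v i| = |((Aᵀ * A) *ᵥ v) i - ∑ j ∈ univ.erase i, (Aᵀ * A) i j * v j| := by
        rw [h, add_sub_cancel_right]
    _ ≤ |((Aᵀ * A) *ᵥ v) i| + ∑ j ∈ univ.erase i, |(Aᵀ * A) i j| * |v j| := by
        refine (abs_sub _ _).trans ?_
        gcongr
        simpa only [abs_mul] using
          abs_sum_le_sum_abs (fun j => (Aᵀ * A) i j * v j) (univ.erase i)

theorem one_sub_mu1_sub_mu1_mul_sum_abs_le (hA : ∀ j, ∑ k, A k j ^ 2 = 1) (hn : 0 < n)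
    {s : ℕ} {S : Finset (Fin n)} (hS : #S ≤ s) {v : Fin n → ℝ} {ε : ℝ}
    (hgrad : ∀ i, |((Aᵀ * A) *ᵥ v) i| ≤ ε) (hcone : ∑ j ∈ Sᶜ, |v j| ≤ ∑ j ∈ S, |v j|) :
    (1 - mu1 A (s - 1) - mu1 A s) * ∑ j ∈ S, |v j| ≤ s * ε := by
  have hε : 0 ≤ ε := (abs_nonneg _).trans (hgrad ⟨0, hn⟩)
  have hgradS : ∑ i ∈ S, |((Aᵀ * A) *ᵥ v) i| ≤ s * ε :=
    calc _ ≤ #S • ε := sum_le_card_nsmul S _ ε fun i _ => hgrad i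
      _ ≤ s * ε := by rw [nsmul_eq_mul]; gcongr
  have hoff : ∑ j, (∑ i ∈ S.erase j, |(Aᵀ * A) i j|) * |v j|
      ≤ mu1 A (s - 1) * ∑ j ∈ S, |v j| + mu1 A s * ∑ j ∈ S, |v j| := by
    rw [← sum_add_sum_compl S, mul_sum]
    refine add_le_add (sum_le_sum fun j hj => ?_) ?_
    · refine mul_le_mul_of_nonneg_right (sum_abs_gram_le_mu1' A (notMem_erase j S) ?_)
        (abs_nonneg _)
      rw [card_erase_of_mem hj]
      omega
    · calc _ ≤ ∑ j ∈ Sᶜ, mu1 A s * |v j| := sum_le_sum fun j _ =>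
            mul_le_mul_of_nonneg_right
              (sum_abs_gram_le_mu1' A (notMem_erase j S) (card_erase_le.trans hS)) (abs_nonneg _)
        _ ≤ mu1 A s * ∑ j ∈ S, |v j| := by
            rw [← mul_sum]
            exact mul_le_mul_of_nonneg_left hcone (mu1_nonneg A hn s)
  have hsum : ∑ j ∈ S, |v j| ≤ s * ε + ∑ j, (∑ i ∈ S.erase j, |(Aᵀ * A) i j|) * |v j| := by
    calc _ ≤ ∑ i ∈ S, (|((Aᵀ * A) *ᵥ v) i| + ∑ j ∈ univ.erase i, |(Aᵀ * A) i j| * |v j|) :=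
          sum_le_sum fun i _ => abs_le_abs_gram_mulVec_add hA v i
      _ ≤ _ := by
          rw [sum_add_distrib, sum_sum_erase_comm]
          simp only [sum_mul]
          gcongr
  linarith

theorem one_sub_mu1_mul_sum_sq_le (hA : ∀ j, ∑ k, A k j ^ 2 = 1) {k : ℕ}
    {B : Finset (Fin n)} (hB : #B ≤ k + 1) (v : Fin n → ℝ) :
    (1 - mu1 A k) * ∑ i ∈ B, v i ^ 2 ≤ ∑ i ∈ B, v i * ∑ j ∈ B, (Aᵀ * A) i j * v j := by
  have hexpand : ∑ i ∈ B, v i * ∑ j ∈ B, (Aᵀ * A) i j * v j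
      = ∑ i ∈ B, v i ^ 2 + ∑ i ∈ B, ∑ j ∈ B.erase i, (Aᵀ * A) i j * (v i * v j) := by
    rw [← sum_add_distrib]
    refine sum_congr rfl fun i hi => ?_
    rw [sum_gram_mul_eq_add hA v hi, mul_add, mul_sum, sq]
    exact congrArg _ (sum_congr rfl fun j _ => by ring)
  have hcard : ∀ i ∈ B, #(B.erase i) ≤ k := fun i hi => by
    rw [card_erase_of_mem hi]
    omega
  have hoff : |∑ i ∈ B, ∑ j ∈ B.erase i, (Aᵀ * A) i j * (v i * v j)|
      ≤ mu1 A k * ∑ i ∈ B, v i ^ 2 := by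
    refine (abs_sum_le_sum_abs _ _).trans ((sum_le_sum fun i _ => abs_sum_le_sum_abs _ _).trans ?_)
    simp only [abs_mul]
    exact sum_sum_erase_abs_mul_le v
      (fun i hi => sum_abs_gram_le_mu1 A (notMem_erase i B) (hcard i hi))
      (fun j hj => sum_abs_gram_le_mu1' A (notMem_erase j B) (hcard j hj))
  rw [hexpand]
  linarith [neg_abs_le (∑ i ∈ B, ∑ j ∈ B.erase i, (Aᵀ * A) i j * (v i * v j))]

theorem one_sub_mu1_mul_sum_sq_le_of_forall_notMem_le (hA : ∀ j, ∑ k, A k j ^ 2 = 1) {k : ℕ}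
    (hk : 0 < k) {B : Finset (Fin n)} (hB : #B ≤ k + 1) {v : Fin n → ℝ} {ε β : ℝ}
    (hgrad : ∀ i, |((Aᵀ * A) *ᵥ v) i| ≤ ε) (hβ0 : 0 ≤ β) (hβ : ∀ j ∉ B, |v j| ≤ β) :
    (1 - mu1 A k) * ∑ i ∈ B, v i ^ 2
      ≤ (∑ i ∈ B, |v i|) * (ε + mu1 A k * (β + (∑ j ∈ Bᶜ, |v j|) / k)) := by
  refine (one_sub_mu1_mul_sum_sq_le hA hB v).trans ?_
  rw [sum_mul]
  refine sum_le_sum fun i hi => ?_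
  have hsplit : ∑ j ∈ B, (Aᵀ * A) i j * v j
      = ((Aᵀ * A) *ᵥ v) i - ∑ j ∈ Bᶜ, (Aᵀ * A) i j * v j :=
    eq_sub_of_add_eq (sum_add_sum_compl B _)
  have hcross : ∑ j ∈ Bᶜ, |(Aᵀ * A) i j| * |v j|
      ≤ mu1 A k * β + mu1 A k * (∑ j ∈ Bᶜ, |v j|) / k :=
    sum_mul_le_of_forall_card_le (fun _ => abs_nonneg _) (fun _ => abs_nonneg _) hk Bᶜ
      (fun U hU hUk => sum_abs_gram_le_mu1 A (fun h => mem_compl.1 (hU h) hi) hUk) hβ0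
      (fun j hj => hβ j (mem_compl.1 hj))
  calc v i * ∑ j ∈ B, (Aᵀ * A) i j * v j ≤ |v i| * |∑ j ∈ B, (Aᵀ * A) i j * v j| :=
        (le_abs_self _).trans (abs_mul _ _).le
    _ ≤ |v i| * (ε + mu1 A k * (β + (∑ j ∈ Bᶜ, |v j|) / k)) := by
        gcongr
        rw [hsplit]
        refine (abs_sub _ _).trans (add_le_add (hgrad i) ?_)
        refine (abs_sum_le_sum_abs _ _).trans ?_
        simp only [abs_mul]
        exact hcross.trans_eq (by ring)

end Gram

section Estimates

variable {m n : ℕ} {A : Matrix (Fin m) (Fin n) ℝ}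

theorem exists_sum_sq_le_of_cone (hA : ∀ j, ∑ k, A k j ^ 2 = 1) {s : ℕ} (hs : 1 ≤ s)
    (hsn : 2 * s ≤ n) {S : Finset (Fin n)} (hS : #S ≤ s) {v : Fin n → ℝ} {ε : ℝ}
    (hgrad : ∀ i, |((Aᵀ * A) *ᵥ v) i| ≤ ε) (hcone : ∑ j ∈ Sᶜ, |v j| ≤ ∑ j ∈ S, |v j|) :
    ∃ B : Finset (Fin n),
      (1 - mu1 A (2 * s - 1)) * ∑ i ∈ B, v i ^ 2
        ≤ 2 * (∑ j ∈ S, |v j|) * ε + 2 * mu1 A (2 * s - 1) * (∑ j ∈ S, |v j|) ^ 2 / s ∧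
      ∑ i ∈ Bᶜ, v i ^ 2 ≤ (∑ j ∈ S, |v j|) ^ 2 / s := by
  have hε : 0 ≤ ε := (abs_nonneg _).trans (hgrad ⟨0, by omega⟩)
  have hμ : 0 ≤ mu1 A (2 * s - 1) := mu1_nonneg A (by omega) _
  have hsR : (1 : ℝ) ≤ s := Nat.one_le_cast.2 hs
  obtain ⟨B, -, hB, htop, hmax⟩ :=
    exists_top_subset_card_eq (fun j => |v j|) (C := univ) (k := 2 * s) (by simpa using hsn)
  set a := ∑ j ∈ S, |v j|
  set c := ∑ j ∈ B, |v j|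
  set τ := ∑ j ∈ Bᶜ, |v j|
  have hτ : 0 ≤ τ := sum_nonneg fun _ _ => abs_nonneg _
  have hcτ : c + τ ≤ 2 * a := by
    have := sum_add_sum_compl S fun j => |v j|
    rw [sum_add_sum_compl B fun j => |v j|, ← this]
    linarith
  have hac : a ≤ c := by
    obtain ⟨T, hST, -, hT⟩ :=
      exists_subsuperset_card_eq (subset_univ S) (by omega : #S ≤ 2 * s) (by simpa using hsn)
    exact (sum_le_sum_of_subset_of_nonneg hST fun _ _ _ => abs_nonneg _).trans
      (hmax T (subset_univ T) hT)
  have hβ : ∀ j ∉ B, |v j| ≤ c / (2 * s) := fun j hj => by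
    have := card_nsmul_le_sum B (fun i => |v i|) (|v j|) fun i hi => htop i hi j (by simp [hj])
    rw [hB, nsmul_eq_mul] at this
    rw [le_div_iff₀ (by positivity)]
    push_cast at this
    linarith
  have hblock := one_sub_mu1_mul_sum_sq_le_of_forall_notMem_le hA (k := 2 * s - 1) (by omega)
    (by omega : #B ≤ 2 * s - 1 + 1) hgrad (by positivity) hβ
  rw [Nat.cast_sub (by omega)] at hblock
  push_cast at hblock
  refine ⟨B, ?_, ?_⟩
  · have hcross : c * (c / (2 * s) + τ / (2 * s - 1)) ≤ 2 * a ^ 2 / s :=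
      calc c * (c / (2 * s) + τ / (2 * s - 1)) ≤ c * (c / (2 * s) + τ / s) := by
            gcongr
            linarith
        _ = c * (c + 2 * τ) / (2 * s) := by field_simp
        _ ≤ 4 * a ^ 2 / (2 * s) := div_le_div_of_nonneg_right (by nlinarith) (by positivity)
        _ = 2 * a ^ 2 / s := by field_simp; ring
    calc (1 - mu1 A (2 * s - 1)) * ∑ i ∈ B, v i ^ 2
        ≤ c * ε + mu1 A (2 * s - 1) * (c * (c / (2 * s) + τ / (2 * s - 1))) :=
          hblock.trans_eq (by ring)
      _ ≤ 2 * a * ε + mu1 A (2 * s - 1) * (2 * a ^ 2 / s) :=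
          add_le_add (mul_le_mul_of_nonneg_right (by linarith) hε)
            (mul_le_mul_of_nonneg_left hcross hμ)
      _ = _ := by ring
  · calc ∑ i ∈ Bᶜ, v i ^ 2 ≤ ∑ j ∈ Bᶜ, c / (2 * s) * |v j| :=
          sum_le_sum fun j hj => by
            rw [← sq_abs, sq]
            exact mul_le_mul_of_nonneg_right (hβ j (mem_compl.1 hj)) (abs_nonneg _)
      _ = c * τ / (2 * s) := by rw [← mul_sum]; ring
      _ ≤ 2 * a * a / (2 * s) := div_le_div_of_nonneg_right
          (mul_le_mul (by linarith) (by linarith) hτ (by linarith)) (by positivity)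
      _ = a ^ 2 / s := by field_simp

theorem sum_sq_mul_sq_le_of_two_le (hA : ∀ j, ∑ k, A k j ^ 2 = 1) {s : ℕ} (hs : 2 ≤ s)
    (hsn : 2 * s ≤ n) (hcond : mu1 A (s - 1) + mu1 A (2 * s - 1) < 1) {S : Finset (Fin n)}
    (hS : #S ≤ s) {v : Fin n → ℝ} {ε : ℝ} (hgrad : ∀ i, |((Aᵀ * A) *ᵥ v) i| ≤ ε)
    (hcone : ∑ j ∈ Sᶜ, |v j| ≤ ∑ j ∈ S, |v j|) :
    (∑ i, v i ^ 2) * (1 - mu1 A (s - 1) - mu1 A (2 * s - 1)) ^ 2 ≤ 7 * s * ε ^ 2 := by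
  have hn : 0 < n := by omega
  have hε : 0 ≤ ε := (abs_nonneg _).trans (hgrad ⟨0, hn⟩)
  obtain ⟨B, hhead, htail⟩ := exists_sum_sq_le_of_cone hA (by omega) hsn hS hgrad hcone
  have hμs := mu1_mono A hn (show s ≤ 2 * s - 1 by omega)
  -- this is what makes `D + μ ≤ 3 (1 - μ)` below
  have hμ3 := mu1_two_mul_sub_one_le A hn hs
  have hμ : 0 ≤ mu1 A (2 * s - 1) := mu1_nonneg A hn _
  have hl1 := one_sub_mu1_sub_mu1_mul_sum_abs_le hA hn hS hgrad hcone
  set μ := mu1 A (2 * s - 1)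
  set D := 1 - mu1 A (s - 1) - μ
  set a := ∑ j ∈ S, |v j|
  have hD : 0 < D := by linarith
  have hsR : (0 : ℝ) < s := by positivity
  have ha : 0 ≤ a := sum_nonneg fun _ _ => abs_nonneg _
  have hDa : D * a ≤ s * ε :=
    (mul_le_mul_of_nonneg_right (by linarith) ha).trans hl1
  have hDa0 : 0 ≤ D * a := by positivity
  have hhead' : (∑ i ∈ B, v i ^ 2) * D ^ 2 * ((1 - μ) * s) ≤ 6 * s * ε ^ 2 * ((1 - μ) * s) :=
    calc (∑ i ∈ B, v i ^ 2) * D ^ 2 * ((1 - μ) * s)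
        = (1 - μ) * (∑ i ∈ B, v i ^ 2) * (D ^ 2 * s) := by ring
      _ ≤ (2 * a * ε + 2 * μ * a ^ 2 / s) * (D ^ 2 * s) := by gcongr
      _ = 2 * ε * (s * D) * (D * a) + 2 * μ * (D * a) ^ 2 := by field_simp
      _ ≤ 2 * ε * (s * D) * (s * ε) + 2 * μ * (s * ε) ^ 2 := by gcongr
      _ = 2 * s ^ 2 * ε ^ 2 * (D + μ) := by ring
      _ ≤ 2 * s ^ 2 * ε ^ 2 * (3 * (1 - μ)) := by gcongr; linarith
      _ = 6 * s * ε ^ 2 * ((1 - μ) * s) := by ring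
  have htail' : (∑ i ∈ Bᶜ, v i ^ 2) * D ^ 2 ≤ s * ε ^ 2 :=
    calc (∑ i ∈ Bᶜ, v i ^ 2) * D ^ 2 ≤ a ^ 2 / s * D ^ 2 := by gcongr
      _ = (D * a) ^ 2 / s := by ring
      _ ≤ (s * ε) ^ 2 / s := by gcongr
      _ = s * ε ^ 2 := by field_simp
  have := le_of_mul_le_mul_right hhead' (mul_pos (by linarith) hsR)
  rw [← sum_add_sum_compl B, add_mul]
  linarith

theorem sum_sq_mul_sq_le_four_mul (hA : ∀ j, ∑ k, A k j ^ 2 = 1) (hn : 0 < n) {s : ℕ}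
    (hcond : mu1 A (s - 1) + mu1 A s ≤ 1) {S : Finset (Fin n)} (hS : #S ≤ s)
    {v : Fin n → ℝ} {ε : ℝ} (hgrad : ∀ i, |((Aᵀ * A) *ᵥ v) i| ≤ ε)
    (hcone : ∑ j ∈ Sᶜ, |v j| ≤ ∑ j ∈ S, |v j|) :
    (∑ i, v i ^ 2) * (1 - mu1 A (s - 1) - mu1 A s) ^ 2 ≤ 4 * (s * ε) ^ 2 := by
  have hl1 := one_sub_mu1_sub_mu1_mul_sum_abs_le hA hn hS hgrad hcone
  set D := 1 - mu1 A (s - 1) - mu1 A s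
  set a := ∑ j ∈ S, |v j|
  have hDa0 : 0 ≤ D * a := mul_nonneg (by linarith) (sum_nonneg fun _ _ => abs_nonneg _)
  have hl1' : ∑ i, |v i| ≤ 2 * a := by rw [← sum_add_sum_compl S]; linarith
  calc (∑ i, v i ^ 2) * D ^ 2 = (∑ i, |v i| ^ 2) * D ^ 2 := by simp only [sq_abs]
    _ ≤ (∑ i, |v i|) ^ 2 * D ^ 2 := by
        gcongr
        exact sum_sq_le_sq_sum_of_nonneg fun _ _ => abs_nonneg _
    _ ≤ (2 * a) ^ 2 * D ^ 2 := by gcongr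
    _ = 4 * (D * a) ^ 2 := by ring
    _ ≤ 4 * (s * ε) ^ 2 := by gcongr

theorem sum_sq_mul_sq_le_of_cone (hA : ∀ j, ∑ k, A k j ^ 2 = 1) {s : ℕ} (hs : 1 ≤ s)
    (hsn : 2 * s ≤ n) (hcond : mu1 A (s - 1) + mu1 A (2 * s - 1) < 1) {S : Finset (Fin n)}
    (hS : #S ≤ s) {v : Fin n → ℝ} {ε : ℝ} (hgrad : ∀ i, |((Aᵀ * A) *ᵥ v) i| ≤ ε)
    (hcone : ∑ j ∈ Sᶜ, |v j| ≤ ∑ j ∈ S, |v j|) :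
    (∑ i, v i ^ 2) * (1 - mu1 A (s - 1) - mu1 A (2 * s - 1)) ^ 2 ≤ 7 * s * ε ^ 2 := by
  obtain rfl | hs := hs.eq_or_lt
  · have := sum_sq_mul_sq_le_four_mul hA (by omega) hcond.le hS hgrad hcone
    norm_num at this ⊢
    linarith [sq_nonneg ε]
  · exact sum_sq_mul_sq_le_of_two_le hA hs hsn hcond hS hgrad hcone

theorem dantzig_sum_sq_sub_mul_sq_le (hA : ∀ j, ∑ k, A k j ^ 2 = 1) {s : ℕ} (hs : 1 ≤ s)
    (hsn : 2 * s ≤ n) (hcond : mu1 A (s - 1) + mu1 A (2 * s - 1) < 1) {x xh : Fin n → ℝ}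
    (hx : (univ.filter fun i => x i ≠ 0).card ≤ s) {z b : Fin m → ℝ} (hb : b = A *ᵥ x + z)
    {lam η : ℝ} (hz : ∀ i, |(Aᵀ *ᵥ z) i| ≤ lam) (hlam : lam ≤ η)
    (hfeas : ∀ i, |(Aᵀ *ᵥ (b - A *ᵥ xh)) i| ≤ η)
    (hmin : ∀ y, (∀ i, |(Aᵀ *ᵥ (b - A *ᵥ y)) i| ≤ η) → ∑ i, |xh i| ≤ ∑ i, |y i|) :
    (∑ i, (xh i - x i) ^ 2) * (1 - mu1 A (s - 1) - mu1 A (2 * s - 1)) ^ 2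
      ≤ 7 * s * (lam + η) ^ 2 := by
  have hgrad : ∀ i, |((Aᵀ * A) *ᵥ (xh - x)) i| ≤ lam + η := fun i => by
    rw [gram_mulVec_sub_eq hb, Pi.sub_apply]
    exact (abs_sub _ _).trans (add_le_add (hz i) (hfeas i))
  have hxfeas : ∀ i, |(Aᵀ *ᵥ (b - A *ᵥ x)) i| ≤ η := fun i => by
    rw [hb, add_sub_cancel_left]
    exact (hz i).trans hlam
  have hcone := sum_compl_abs_sub_le (S := univ.filter fun i => x i ≠ 0)
    (fun j hj => by simpa using hj) (hmin x hxfeas)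
  exact sum_sq_mul_sq_le_of_cone hA hs hsn hcond hx hgrad hcone

end Estimates

theorem stmt12_general {m n : ℕ} (A : Matrix (Fin m) (Fin n) ℝ)
    (hA : ∀ j, ∑ k, (A k j) ^ 2 = 1)
    (s : ℕ) (hs1 : 1 ≤ s) (hsn : 2 * s - 1 ≤ n - 1)
    (hcond : mu1 A (s - 1) + mu1 A (2 * s - 1) < 1)
    (σ : ℝ)
    (x : Fin n → ℝ)
    (hx : (Finset.univ.filter fun i => x i ≠ 0).card ≤ s)
    (z : Fin m → ℝ) (b : Fin m → ℝ)
    (hb : b = A.mulVec x + z)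
    (hz : ∀ i, |A.transpose.mulVec z i| ≤ σ * Real.sqrt (2 * Real.log n))
    (xh : Fin n → ℝ)
    (hfeas : ∀ i, |A.transpose.mulVec (b - A.mulVec xh) i| ≤
      3 / 2 * (σ * Real.sqrt (2 * Real.log n)))
    (hmin : ∀ y : Fin n → ℝ,
      (∀ i, |A.transpose.mulVec (b - A.mulVec y) i| ≤
        3 / 2 * (σ * Real.sqrt (2 * Real.log n))) →
      ∑ i, |xh i| ≤ ∑ i, |y i|) :
    ∑ i, (xh i - x i) ^ 2 ≤
      72 * (5 + Real.log n) / (1 - mu1 A (s - 1) - mu1 A (2 * s - 1)) ^ 2 *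
        ∑ j, max (σ ^ 2) ((x j) ^ 2) := by
  have h2s : 2 * s ≤ n := by omega
  set lam := σ * Real.sqrt (2 * Real.log n) with hlam
  have hlam0 : 0 ≤ lam := (abs_nonneg _).trans (hz ⟨0, by omega⟩)
  have herr := dantzig_sum_sq_sub_mul_sq_le hA hs1 h2s hcond hx hb hz
    (by linarith : lam ≤ 3 / 2 * lam) hfeas hmin
  have hlog : 0 ≤ Real.log n := Real.log_natCast_nonneg n
  have hlam_sq : lam ^ 2 = 2 * Real.log n * σ ^ 2 := by
    rw [hlam, mul_pow, Real.sq_sqrt (by positivity)]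
    ring
  have hnoise : 2 * s * σ ^ 2 ≤ ∑ j, max (σ ^ 2) (x j ^ 2) :=
    calc 2 * s * σ ^ 2 ≤ n * σ ^ 2 := by gcongr; exact_mod_cast h2s
      _ = ∑ _j : Fin n, σ ^ 2 := by simp
      _ ≤ _ := sum_le_sum fun j _ => le_max_left _ _
  have hD : 0 < 1 - mu1 A (s - 1) - mu1 A (2 * s - 1) := by linarith
  rw [div_mul_eq_mul_div, le_div_iff₀ (by positivity)]
  calc _ ≤ 7 * s * (lam + 3 / 2 * lam) ^ 2 := herr
    _ = 175 / 2 * Real.log n * (s * σ ^ 2) := by linear_combination 175 / 4 * s * hlam_sq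
    _ ≤ 72 * (5 + Real.log n) * (2 * s * σ ^ 2) := by
        nlinarith [mul_nonneg hlog (by positivity : (0 : ℝ) ≤ s * σ ^ 2)]
    _ ≤ _ := by gcongr

/-- Oracle inequality for the Dantzig selector under the cumulative coherence condition
`μ₁(s−1) + μ₁(2s−1) < 1` (deterministic form, on the event
`‖Aᵀz‖_∞ ≤ σ√(2 log n)`), with `η* = (3/2)σ√(2 log n)`. -/
theorem stmt12 {m n : ℕ} (hn : 2 ≤ n) (A : Matrix (Fin m) (Fin n) ℝ)
    (hA : ∀ j, ∑ k, (A k j) ^ 2 = 1)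
    (s : ℕ) (hs1 : 1 ≤ s) (hsn : 2 * s - 1 ≤ n - 1)
    (hcond : mu1 A (s - 1) + mu1 A (2 * s - 1) < 1)
    (σ : ℝ) (hσ : 0 < σ)
    (x : Fin n → ℝ)
    (hx : (Finset.univ.filter fun i => x i ≠ 0).card ≤ s)
    (z : Fin m → ℝ) (b : Fin m → ℝ)
    (hb : b = A.mulVec x + z)
    (hz : ∀ i, |A.transpose.mulVec z i| ≤ σ * Real.sqrt (2 * Real.log n))
    (xh : Fin n → ℝ)
    (hfeas : ∀ i, |A.transpose.mulVec (b - A.mulVec xh) i| ≤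
      3 / 2 * (σ * Real.sqrt (2 * Real.log n)))
    (hmin : ∀ y : Fin n → ℝ,
      (∀ i, |A.transpose.mulVec (b - A.mulVec y) i| ≤
        3 / 2 * (σ * Real.sqrt (2 * Real.log n))) →
      ∑ i, |xh i| ≤ ∑ i, |y i|) :
    ∑ i, (xh i - x i) ^ 2 ≤
      72 * (5 + Real.log n) / (1 - mu1 A (s - 1) - mu1 A (2 * s - 1)) ^ 2 *
        ∑ j, max (σ ^ 2) ((x j) ^ 2) :=
  stmt12_general A hA s hs1 hsn hcond σ x hx z b hb hz xh hfeas hmin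
end

section
/- Let A be an m×n real matrix whose columns have ℓ2-norm 1, let s ∈ {1,…,n} with s ≤ n−1, and let τ > 0. Assume μ₁(A, s−1) + τ·√s·μ₁(A, s) < 1. Then for every x ∈ ℝ^n and every index set S ⊆ {1,…,n} with |S| ≤ s and ‖x_{S^c}‖₁ ≤ τ‖x_S‖₁, one has ‖Ax‖₂ ≥ [ (1 − μ₁(A,s−1) − τ√s·μ₁(A,s)) / √(1 + μ₁(A,s−1)) ]·‖x_S‖₂. In particular A satisfies the restricted eigenvalue condition of order s and τ with K(s,τ,A) ≥ (1 − μ₁(A,s−1) − τ√s·μ₁(A,s)) / √(1 + μ₁(A,s−1)). -/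
/-!
Put `u = A x_S` and write `Ax = u + A x_{Sᶜ}`. Expanding in the Gram matrix `G = AᵀA`, whose
diagonal is `1`, gives `⟪u, u⟫ = ‖x_S‖² + (off-diagonal part)`, and the off-diagonal part is at
most `μ₁(s-1) ‖x_S‖²` in absolute value by the Schur test (the off-diagonal entries of a row
of `G` inside `S` have `ℓ¹`-mass at most `μ₁(s-1)`). The cross term `⟪u, A x_{Sᶜ}⟫` is at most
`μ₁(s) ‖x_S‖_∞ ‖x_{Sᶜ}‖₁ ≤ μ₁(s) ‖x_S‖₂ · τ √s ‖x_S‖₂` by the cone condition. Hence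
`(1 - μ₁(s-1) - τ√s μ₁(s)) ‖x_S‖² ≤ ⟪u, Ax⟫ ≤ ‖u‖ ‖Ax‖ ≤ √(1 + μ₁(s-1)) ‖x_S‖ ‖Ax‖`.
-/

open scoped Classical

open Finset

theorem div_mul_le_of_mul_sq_le {c d r N : ℝ} (hd : 0 ≤ d) (hr : 0 ≤ r) (hN : 0 ≤ N)
    (h : c * r ^ 2 ≤ d * r * N) : c / d * r ≤ N := by
  rcases hd.eq_or_lt with rfl | hd
  · simpa using hN
  rcases hr.eq_or_lt with rfl | hr
  · simpa using hN
  rw [div_mul_eq_mul_div, div_le_iff₀ hd]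
  nlinarith

section FiniteSums

variable {κ : Type*}

theorem abs_le_sqrt_sum_sq {S : Finset κ} (x : κ → ℝ) {i : κ} (hi : i ∈ S) :
    |x i| ≤ √(∑ j ∈ S, x j ^ 2) :=
  Real.abs_le_sqrt (single_le_sum (fun j _ => sq_nonneg (x j)) hi)

theorem sum_abs_le_sqrt_card_mul_sqrt_sum_sq (S : Finset κ) (x : κ → ℝ) :
    ∑ i ∈ S, |x i| ≤ √(#S : ℝ) * √(∑ i ∈ S, x i ^ 2) := by
  rw [← Real.sqrt_mul (Nat.cast_nonneg _),
    ← abs_of_nonneg (sum_nonneg fun i _ => abs_nonneg (x i))]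
  refine Real.abs_le_sqrt ?_
  simpa only [sq_abs] using sq_sum_le_card_mul_sum_sq (s := S) (f := fun i => |x i|)

theorem abs_sum_sum_erase_mul_le [DecidableEq κ] {G : κ → κ → ℝ}
    (hG : ∀ i j, G i j = G j i) {S : Finset κ} {μ : ℝ}
    (hμ : ∀ i ∈ S, ∑ j ∈ S.erase i, |G i j| ≤ μ) (x : κ → ℝ) :
    |∑ i ∈ S, ∑ j ∈ S.erase i, x i * x j * G i j| ≤ μ * ∑ i ∈ S, x i ^ 2 := by
  have hswap : ∑ i ∈ S, ∑ j ∈ S.erase i, x j ^ 2 * |G i j|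
      = ∑ i ∈ S, ∑ j ∈ S.erase i, x i ^ 2 * |G i j| := by
    rw [sum_comm' (t' := S) (s' := fun j => S.erase j)]
    · simp_rw [hG]
    · intro i j
      simp only [mem_erase]
      tauto
  calc |∑ i ∈ S, ∑ j ∈ S.erase i, x i * x j * G i j|
      ≤ ∑ i ∈ S, ∑ j ∈ S.erase i, |x i * x j * G i j| :=
        (abs_sum_le_sum_abs _ _).trans (sum_le_sum fun i _ => abs_sum_le_sum_abs _ _)
    _ ≤ ∑ i ∈ S, ∑ j ∈ S.erase i, (x i ^ 2 * |G i j| + x j ^ 2 * |G i j|) / 2 := by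
        gcongr with i _ j _
        rw [abs_mul, abs_mul]
        nlinarith [abs_nonneg (G i j), sq_abs (x i), sq_abs (x j), sq_nonneg (|x i| - |x j|)]
    _ = ∑ i ∈ S, ∑ j ∈ S.erase i, x i ^ 2 * |G i j| := by
        simp only [← sum_div, sum_add_distrib, hswap]
        ring
    _ ≤ ∑ i ∈ S, x i ^ 2 * μ := by
        gcongr with i hi
        rw [← mul_sum]
        exact mul_le_mul_of_nonneg_left (hμ i hi) (sq_nonneg _)
    _ = μ * ∑ i ∈ S, x i ^ 2 := by rw [mul_sum]; simp_rw [mul_comm]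

theorem abs_sum_sum_mul_le {G : κ → κ → ℝ} {S T : Finset κ} {x y : κ → ℝ} {M ν : ℝ}
    (hM : 0 ≤ M) (hx : ∀ i ∈ S, |x i| ≤ M) (hν : ∀ j ∈ T, ∑ i ∈ S, |G i j| ≤ ν) :
    |∑ i ∈ S, ∑ j ∈ T, x i * y j * G i j| ≤ M * ν * ∑ j ∈ T, |y j| := by
  rw [sum_comm]
  calc |∑ j ∈ T, ∑ i ∈ S, x i * y j * G i j|
      ≤ ∑ j ∈ T, |y j| * ∑ i ∈ S, |x i| * |G i j| := by
        refine (abs_sum_le_sum_abs _ _).trans (sum_le_sum fun j _ => ?_)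
        refine (abs_sum_le_sum_abs _ _).trans_eq ?_
        rw [mul_sum]
        exact sum_congr rfl fun i _ => by rw [abs_mul, abs_mul]; ring
    _ ≤ ∑ j ∈ T, |y j| * (M * ν) := by
        gcongr with j hj
        calc ∑ i ∈ S, |x i| * |G i j| ≤ ∑ i ∈ S, M * |G i j| := by
              gcongr with i hi; exact hx i hi
          _ ≤ M * ν := by rw [← mul_sum]; exact mul_le_mul_of_nonneg_left (hν j hj) hM
    _ = M * ν * ∑ j ∈ T, |y j| := by rw [← sum_mul, mul_comm]

end FiniteSums

open scoped RealInnerProductSpace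

section Dictionary

variable {E : Type*} [NormedAddCommGroup E] [InnerProductSpace ℝ E] {κ : Type*}

theorem inner_sum_smul_sum_smul (a : κ → E) (S T : Finset κ) (x y : κ → ℝ) :
    ⟪∑ i ∈ S, x i • a i, ∑ j ∈ T, y j • a j⟫
      = ∑ i ∈ S, ∑ j ∈ T, x i * y j * ⟪a i, a j⟫ := by
  rw [sum_inner]
  refine sum_congr rfl fun i _ => ?_
  rw [real_inner_smul_left, inner_sum, mul_sum]
  exact sum_congr rfl fun j _ => by rw [real_inner_smul_right]; ring

theorem real_inner_self_sum_smul_of_norm_eq_one [DecidableEq κ] {a : κ → E}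
    (ha : ∀ i, ‖a i‖ = 1) (S : Finset κ) (x : κ → ℝ) :
    ⟪∑ i ∈ S, x i • a i, ∑ i ∈ S, x i • a i⟫
      = ∑ i ∈ S, x i ^ 2 + ∑ i ∈ S, ∑ j ∈ S.erase i, x i * x j * ⟪a i, a j⟫ := by
  rw [inner_sum_smul_sum_smul, ← sum_add_distrib]
  refine sum_congr rfl fun i hi => ?_
  rw [← add_sum_erase S _ hi, real_inner_self_eq_norm_sq, ha, one_pow, mul_one, sq]

theorem le_norm_sum_smul_of_cumulative_coherence [Fintype κ] [DecidableEq κ] {a : κ → E}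
    (ha : ∀ i, ‖a i‖ = 1) (x : κ → ℝ) (S : Finset κ) {s : ℕ} (hS : #S ≤ s) {μ ν τ : ℝ}
    (hμ : ∀ i ∈ S, ∑ j ∈ S.erase i, |⟪a i, a j⟫| ≤ μ)
    (hν : ∀ j ∉ S, ∑ i ∈ S, |⟪a i, a j⟫| ≤ ν) (hν0 : 0 ≤ ν) (hτ : 0 ≤ τ)
    (htail : ∑ j ∈ Sᶜ, |x j| ≤ τ * ∑ j ∈ S, |x j|) :
    (1 - μ - τ * √s * ν) / √(1 + μ) * √(∑ j ∈ S, x j ^ 2) ≤ ‖∑ j, x j • a j‖ := by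
  set u := ∑ i ∈ S, x i • a i
  set Q := ∑ j ∈ S, x j ^ 2
  have hQ : 0 ≤ Q := sum_nonneg fun j _ => sq_nonneg (x j)
  have hsplit : ∑ j, x j • a j = u + ∑ j ∈ Sᶜ, x j • a j := (sum_add_sum_compl S _).symm
  have hdiag : |⟪u, u⟫ - Q| ≤ μ * Q := by
    rw [real_inner_self_sum_smul_of_norm_eq_one ha, add_sub_cancel_left]
    exact abs_sum_sum_erase_mul_le (fun i j => real_inner_comm (a j) (a i)) hμ x
  have hcross : |⟪u, ∑ j ∈ Sᶜ, x j • a j⟫| ≤ τ * √s * ν * Q :=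
    calc |⟪u, ∑ j ∈ Sᶜ, x j • a j⟫| ≤ √Q * ν * ∑ j ∈ Sᶜ, |x j| := by
          rw [inner_sum_smul_sum_smul]
          exact abs_sum_sum_mul_le (Real.sqrt_nonneg Q) (fun i hi => abs_le_sqrt_sum_sq x hi)
            (fun j hj => hν j (mem_compl.mp hj))
      _ ≤ √Q * ν * (τ * (√s * √Q)) := by
          gcongr
          calc ∑ j ∈ Sᶜ, |x j| ≤ τ * ∑ j ∈ S, |x j| := htail
            _ ≤ τ * (√(#S : ℝ) * √Q) := by
                gcongr; exact sum_abs_le_sqrt_card_mul_sqrt_sum_sq S x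
            _ ≤ τ * (√s * √Q) := by gcongr
      _ = τ * √s * ν * Q := by
          linear_combination τ * √s * ν * Real.mul_self_sqrt hQ
  have hu : ‖u‖ ≤ √(1 + μ) * √Q := by
    rw [← Real.sqrt_mul' _ hQ, ← Real.sqrt_sq (norm_nonneg u), ← real_inner_self_eq_norm_sq]
    exact Real.sqrt_le_sqrt (by linarith [le_abs_self (⟪u, u⟫ - Q)])
  refine div_mul_le_of_mul_sq_le (Real.sqrt_nonneg _) (Real.sqrt_nonneg Q) (norm_nonneg _) ?_
  calc (1 - μ - τ * √s * ν) * √Q ^ 2 ≤ ⟪u, ∑ j, x j • a j⟫ := by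
        rw [Real.sq_sqrt hQ, hsplit, inner_add_right]
        linarith [neg_abs_le (⟪u, u⟫ - Q), neg_abs_le ⟪u, ∑ j ∈ Sᶜ, x j • a j⟫]
    _ ≤ ‖u‖ * ‖∑ j, x j • a j‖ := real_inner_le_norm _ _
    _ ≤ √(1 + μ) * √Q * ‖∑ j, x j • a j‖ := by gcongr

end Dictionary

open scoped Matrix

theorem norm_toLp_two_eq {ι : Type*} [Fintype ι] (v : ι → ℝ) :
    ‖WithLp.toLp 2 v‖ = √(∑ i, v i ^ 2) := by
  simp [EuclideanSpace.norm_eq]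

section Coherence

variable {m n : ℕ} (A : Matrix (Fin m) (Fin n) ℝ)

theorem le_mu1 {s : ℕ} {S : Finset (Fin n)} (hS : #S ≤ s) {i : Fin n} (hi : i ∉ S) :
    ∑ j ∈ S, |∑ k, A k i * A k j| ≤ mu1 A s := by
  refine le_csSup (Set.Finite.bddAbove ?_) ⟨S, hS, i, hi, rfl⟩
  refine (Set.finite_range fun p : Finset (Fin n) × Fin n =>
    ∑ j ∈ p.1, |∑ k, A k p.2 * A k j|).subset ?_
  rintro t ⟨S, -, i, -, rfl⟩
  exact ⟨(S, i), rfl⟩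

theorem mu1_nonneg_s15 (s : ℕ) : 0 ≤ mu1 A s :=
  Real.sSup_nonneg (by rintro t ⟨S, -, i, -, rfl⟩; positivity)

theorem real_inner_toLp_transpose (i j : Fin n) :
    ⟪WithLp.toLp 2 (Aᵀ i), WithLp.toLp 2 (Aᵀ j)⟫ = ∑ k, A k i * A k j := by
  simp [PiLp.inner_apply, mul_comm]

theorem sum_smul_toLp_transpose (x : Fin n → ℝ) :
    ∑ j, x j • WithLp.toLp 2 (Aᵀ j) = WithLp.toLp 2 (A *ᵥ x) := by
  ext k
  simp [Matrix.mulVec, dotProduct, mul_comm]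

end Coherence

theorem stmt15_general {m n : ℕ} (A : Matrix (Fin m) (Fin n) ℝ)
    (hA : ∀ j, ∑ k, (A k j) ^ 2 = 1)
    (s : ℕ)
    (τ : ℝ) (hτ : 0 < τ) :
    ∀ x : Fin n → ℝ, ∀ S : Finset (Fin n), S.card ≤ s →
      (∑ j ∈ Sᶜ, |x j|) ≤ τ * ∑ j ∈ S, |x j| →
      Real.sqrt (∑ k, (A.mulVec x k) ^ 2) ≥
        (1 - mu1 A (s - 1) - τ * Real.sqrt s * mu1 A s) /
            Real.sqrt (1 + mu1 A (s - 1)) *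
          Real.sqrt (∑ j ∈ S, (x j) ^ 2) := by
  intro x S hS htail
  have hcols : ∀ j, ‖WithLp.toLp 2 (Aᵀ j)‖ = 1 := fun j => by
    simpa [norm_toLp_two_eq] using hA j
  have hμ : ∀ i ∈ S, ∑ j ∈ S.erase i, |⟪WithLp.toLp 2 (Aᵀ i), WithLp.toLp 2 (Aᵀ j)⟫|
      ≤ mu1 A (s - 1) := fun i hi => by
    simp_rw [real_inner_toLp_transpose]
    exact le_mu1 A (by rw [card_erase_of_mem hi]; omega) (S.notMem_erase i)
  have hν : ∀ j ∉ S, ∑ i ∈ S, |⟪WithLp.toLp 2 (Aᵀ i), WithLp.toLp 2 (Aᵀ j)⟫|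
      ≤ mu1 A s := fun j hj => by
    simpa only [real_inner_toLp_transpose, mul_comm] using le_mu1 A hS hj
  have key := le_norm_sum_smul_of_cumulative_coherence hcols x S hS hμ hν
    (mu1_nonneg_s15 A s) hτ.le htail
  rwa [sum_smul_toLp_transpose, norm_toLp_two_eq] at key

/-- Cumulative coherence implies the restricted eigenvalue condition: if
`μ₁(s−1) + τ√s μ₁(s) < 1`, then for every `x` and every `S` with `|S| ≤ s` and
`‖x_{Sᶜ}‖₁ ≤ τ‖x_S‖₁`,
`‖Ax‖₂ ≥ [(1 − μ₁(s−1) − τ√s μ₁(s)) / √(1 + μ₁(s−1))] ‖x_S‖₂`; hence `A` satisfies the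
RE-condition of order `s` and `τ` with `K(s,τ) ≥ (1 − μ₁(s−1) − τ√s μ₁(s))/√(1 + μ₁(s−1))`. -/
theorem stmt15 {m n : ℕ} (A : Matrix (Fin m) (Fin n) ℝ)
    (hA : ∀ j, ∑ k, (A k j) ^ 2 = 1)
    (s : ℕ) (hs1 : 1 ≤ s) (hsn : s ≤ n - 1)
    (τ : ℝ) (hτ : 0 < τ)
    (hcond : mu1 A (s - 1) + τ * Real.sqrt s * mu1 A s < 1) :
    ∀ x : Fin n → ℝ, ∀ S : Finset (Fin n), S.card ≤ s →
      (∑ j ∈ Sᶜ, |x j|) ≤ τ * ∑ j ∈ S, |x j| →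
      Real.sqrt (∑ k, (A.mulVec x k) ^ 2) ≥
        (1 - mu1 A (s - 1) - τ * Real.sqrt s * mu1 A s) /
            Real.sqrt (1 + mu1 A (s - 1)) *
          Real.sqrt (∑ j ∈ S, (x j) ^ 2) :=
  stmt15_general A hA s τ hτ
end
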